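/- All-pairs split recurrence: let G be a weighted directed graph with no negative cycles and let K \ge 1. Suppose S \subseteq V is such that for all u,v \in V and all K < h \le 3K/2, every simple path p achieving d_{\le h}(u,v) with |p| > K contains a vertex x \in S splitting p into parts of at most K edges each. Then for all such u, v, h: d_{\le h}(u,v) = min( d_{\le K}(u,v), min over x \in S and h' with h - K \le h' \le K of ( d_{\le h'}(u,x) + d_{\le h-h'}(x,v) ) ). -/
import Mathlib


open scoped BigOperators

/-- A walk with exactly `k` edges from `s` to `t` in the directed graph with
edge relation `E`, given by its vertex sequence `p`. -/
def IsWalk {V : Type*} (E : V → V → Prop) (k : ℕ) (p : ℕ → V) (s t : V) : Prop :=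
  p 0 = s ∧ p k = t ∧ ∀ i < k, E (p i) (p (i + 1))

/-- Total weight of the first `k` edges of the vertex sequence `p`. -/
noncomputable def walkWeight {V : Type*} (w : V → V → ℝ) (k : ℕ) (p : ℕ → V) : ℝ :=
  ∑ i ∈ Finset.range k, w (p i) (p (i + 1))

/-- `dExact E w h s t` : minimum weight of a walk from `s` to `t` with exactly `h` edges
(`⊤` if none exists). -/
noncomputable def dExact {V : Type*} (E : V → V → Prop) (w : V → V → ℝ)
    (h : ℕ) (s t : V) : EReal :=
  sInf {x : EReal | ∃ p : ℕ → V, IsWalk E h p s t ∧ x = (walkWeight w h p : ℝ)}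

/-- `dLe E w h s t` : minimum weight of a walk from `s` to `t` with at most `h` edges
(`⊤` if none exists). -/
noncomputable def dLe {V : Type*} (E : V → V → Prop) (w : V → V → ℝ)
    (h : ℕ) (s t : V) : EReal :=
  sInf {x : EReal | ∃ k ≤ h, ∃ p : ℕ → V, IsWalk E k p s t ∧ x = (walkWeight w k p : ℝ)}

/-- The graph has no negative-weight cycles. -/
def NoNegCycle {V : Type*} (E : V → V → Prop) (w : V → V → ℝ) : Prop :=
  ∀ (v : V) (k : ℕ), 0 < k → ∀ p : ℕ → V, IsWalk E k p v v → 0 ≤ walkWeight w k p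

section Aux
variable {V : Type*} (E : V → V → Prop) (w : V → V → ℝ)

/-- splice out a cycle -/
lemma splice {k a b : ℕ} {p : ℕ → V} {s t : V} (hab : a < b) (hbk : b ≤ k)
    (hpp : p a = p b) (hw : IsWalk E k p s t) :
    IsWalk E (k - (b - a)) (fun n => if n ≤ a then p n else p (n + (b - a))) s t ∧
    walkWeight w (k - (b - a)) (fun n => if n ≤ a then p n else p (n + (b - a)))
      = walkWeight w k p - walkWeight w (b - a) (fun n => p (a + n)) := by
  obtain ⟨h0, hk, he⟩ := hw
  set d := b - a with hd
  set k' := k - d with hk'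
  have hak' : a ≤ k' := by omega
  have hb : b = a + d := by omega
  have hkk : k = k' + d := by omega
  set q : ℕ → V := fun n => if n ≤ a then p n else p (n + d) with hq
  have hqval : ∀ n, a ≤ n → q n = p (n + d) := by
    intro n hn
    rcases eq_or_lt_of_le hn with h | h
    · simp [hq, ← h, hpp, hb]
    · simp [hq, Nat.not_le.mpr h]
  have hqval2 : ∀ n, n ≤ a → q n = p n := by intro n hn; simp [hq, hn]
  refine ⟨⟨by simp [hq, h0], ?_, ?_⟩, ?_⟩
  · rw [hqval k' hak', ← hkk, hk]
  · intro i hi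
    rcases lt_or_ge i a with h | h
    · rw [hqval2 i h.le, hqval2 (i+1) h]
      exact he i (by omega)
    · rw [hqval i h, hqval (i+1) (by omega)]
      have : E (p (i + d)) (p (i + d + 1)) := he (i + d) (by omega)
      convert this using 2
      omega
  · have S1 : ∑ i ∈ Finset.Ico 0 a, w (q i) (q (i+1)) =
        ∑ i ∈ Finset.Ico 0 a, w (p i) (p (i+1)) := by
      refine Finset.sum_congr rfl fun i hi => ?_
      simp only [Finset.mem_Ico] at hi
      rw [hqval2 i (by omega), hqval2 (i+1) (by omega)]
    have S2 : ∑ i ∈ Finset.Ico a k', w (q i) (q (i+1)) =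
        ∑ i ∈ Finset.Ico b k, w (p i) (p (i+1)) := by
      rw [Finset.sum_Ico_eq_sum_range, Finset.sum_Ico_eq_sum_range]
      have hkb : k' - a = k - b := by omega
      rw [hkb]
      refine Finset.sum_congr rfl fun i hi => ?_
      rw [hqval (a+i) (by omega), hqval (a+i+1) (by omega)]
      have e1 : a + i + d = b + i := by omega
      have e2 : a + i + 1 + d = b + i + 1 := by omega
      rw [e1, e2]
    have S3 : walkWeight w d (fun n => p (a + n)) =
        ∑ i ∈ Finset.Ico a b, w (p i) (p (i+1)) := by
      rw [walkWeight, Finset.sum_Ico_eq_sum_range]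
      have : b - a = d := by omega
      rw [this]
      refine Finset.sum_congr rfl fun i hi => ?_
      have : a + i + 1 = a + (i + 1) := by omega
      rw [this]
    have hsplit : walkWeight w k p = (∑ i ∈ Finset.Ico 0 a, w (p i) (p (i+1)))
        + (∑ i ∈ Finset.Ico a b, w (p i) (p (i+1)))
        + (∑ i ∈ Finset.Ico b k, w (p i) (p (i+1))) := by
      rw [walkWeight, Finset.range_eq_Ico,
        ← Finset.sum_Ico_consecutive _ (Nat.zero_le b) hbk,
        ← Finset.sum_Ico_consecutive _ (Nat.zero_le a) hab.le]
    have hq2 : walkWeight w k' q = (∑ i ∈ Finset.Ico 0 a, w (q i) (q (i+1)))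
        + (∑ i ∈ Finset.Ico a k', w (q i) (q (i+1))) := by
      rw [walkWeight, Finset.range_eq_Ico,
        ← Finset.sum_Ico_consecutive _ (Nat.zero_le a) hak']
    rw [hq2, S1, S2, S3, hsplit]
    ring

end Aux

section Aux2
variable {V : Type*} {E : V → V → Prop} {w : V → V → ℝ}

lemma exists_simple (hG : NoNegCycle E w) :
    ∀ (k : ℕ) (p : ℕ → V) (s t : V), IsWalk E k p s t →
    ∃ k' ≤ k, ∃ q, IsWalk E k' q s t ∧
      Function.Injective (fun i : Fin (k' + 1) => q i) ∧
      walkWeight w k' q ≤ walkWeight w k p := by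
  intro k
  induction k using Nat.strong_induction_on with
  | _ k ih =>
    intro p s t hw
    by_cases hinj : Function.Injective (fun i : Fin (k + 1) => p i)
    · exact ⟨k, le_rfl, p, hw, hinj, le_rfl⟩
    · rw [Function.not_injective_iff] at hinj
      obtain ⟨i, j, hij, hne⟩ := hinj
      -- get a < b ≤ k with p a = p b
      obtain ⟨a, b, hab, hbk, hpp⟩ : ∃ a b : ℕ, a < b ∧ b ≤ k ∧ p a = p b := by
        rcases lt_or_gt_of_ne (Fin.val_ne_of_ne hne) with h | h
        · exact ⟨i, j, h, by omega, hij⟩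
        · exact ⟨j, i, h, by omega, hij.symm⟩
      obtain ⟨hw', hwt⟩ := splice E w hab hbk hpp hw
      have hcyc : 0 ≤ walkWeight w (b - a) (fun n => p (a + n)) := by
        refine hG (p a) (b - a) (by omega) _ ⟨by simp, ?_, ?_⟩
        · simp only []
          have : a + (b - a) = b := by omega
          rw [this, hpp]
        · intro n hn
          have e3 : a + (n + 1) = a + n + 1 := by omega
          show E (p (a + n)) (p (a + (n + 1)))
          rw [e3]
          exact hw.2.2 (a + n) (by omega)
      obtain ⟨k'', hk'', q, hq, hqi, hqw⟩ :=
        ih (k - (b - a)) (by omega) _ s t hw'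
      exact ⟨k'', by omega, q, hq, hqi, by rw [hwt] at hqw; linarith⟩

end Aux2

section Aux3
variable {V : Type*} {E : V → V → Prop} {w : V → V → ℝ}

lemma dLe_le_walk {h k : ℕ} {p : ℕ → V} {u v : V} (hk : k ≤ h)
    (hw : IsWalk E k p u v) : dLe E w h u v ≤ ((walkWeight w k p : ℝ) : EReal) :=
  sInf_le ⟨k, hk, p, hw, rfl⟩

lemma dLe_mono {h1 h2 : ℕ} (hh : h1 ≤ h2) (u v : V) :
    dLe E w h2 u v ≤ dLe E w h1 u v :=
  sInf_le_sInf (fun x ⟨k, hk, p, hp, hx⟩ => ⟨k, hk.trans hh, p, hp, hx⟩)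

lemma dLe_attained [Fintype V] (hG : NoNegCycle E w) (h : ℕ) (u v : V)
    (hne : dLe E w h u v ≠ ⊤) :
    ∃ k ≤ h, ∃ p : ℕ → V, IsWalk E k p u v ∧
      Function.Injective (fun i : Fin (k + 1) => p i) ∧
      ((walkWeight w k p : ℝ) : EReal) = dLe E w h u v := by
  classical
  set A : Set EReal := {x : EReal | ∃ k ≤ h, ∃ p : ℕ → V, IsWalk E k p u v ∧
      Function.Injective (fun i : Fin (k + 1) => p i) ∧
      x = ((walkWeight w k p : ℝ) : EReal)} with hA
  have heq : dLe E w h u v = sInf A := by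
    apply le_antisymm
    · exact sInf_le_sInf (fun x ⟨k, hk, p, hp, _, hx⟩ => ⟨k, hk, p, hp, hx⟩)
    · apply le_sInf
      rintro b ⟨k, hk, p, hp, rfl⟩
      obtain ⟨k', hk', q, hq, hqi, hqw⟩ := exists_simple hG k p u v hp
      calc sInf A ≤ ((walkWeight w k' q : ℝ) : EReal) :=
            sInf_le ⟨k', hk'.trans hk, q, hq, hqi, rfl⟩
        _ ≤ _ := by exact_mod_cast hqw
  have hfin : A.Finite := by
    have : A ⊆ Set.range (fun pr : (Σ k : Fin (h + 1), (Fin (k.1 + 1) → V)) =>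
        ((walkWeight w pr.1.1 (fun n => pr.2 ⟨min n pr.1.1, by omega⟩) : ℝ) : EReal)) := by
      rintro x ⟨k, hk, p, hp, hpi, rfl⟩
      refine ⟨⟨⟨k, by omega⟩, fun i => p i⟩, ?_⟩
      simp only []
      congr 1
      norm_cast
      refine Finset.sum_congr rfl fun i hi => ?_
      simp only [Finset.mem_range] at hi
      have h1 : min i k = i := by omega
      have h2 : min (i + 1) k = i + 1 := by omega
      simp only [Fin.val_mk, h1, h2]
    exact (Set.finite_range _).subset this
  have hAne : A.Nonempty := by
    by_contra hc
    rw [Set.not_nonempty_iff_eq_empty] at hc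
    rw [heq, hc, sInf_empty] at hne
    exact hne rfl
  have := hAne.csInf_mem hfin
  obtain ⟨k, hk, p, hp, hpi, hx⟩ := this
  exact ⟨k, hk, p, hp, hpi, by rw [heq, ← hx]⟩

lemma dLe_ne_bot [Fintype V] (hG : NoNegCycle E w) (h : ℕ) (u v : V) :
    dLe E w h u v ≠ ⊥ := by
  by_cases htop : dLe E w h u v = ⊤
  · simp [htop]
  · obtain ⟨k, hk, p, hp, hpi, hx⟩ := dLe_attained hG h u v htop
    rw [← hx]
    exact EReal.coe_ne_bot _

end Aux3

section Aux4
variable {V : Type*} {E : V → V → Prop} {w : V → V → ℝ}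

lemma concat {k1 k2 : ℕ} {p1 p2 : ℕ → V} {s m t : V}
    (h1 : IsWalk E k1 p1 s m) (h2 : IsWalk E k2 p2 m t) :
    IsWalk E (k1 + k2) (fun n => if n < k1 then p1 n else p2 (n - k1)) s t ∧
    walkWeight w (k1 + k2) (fun n => if n < k1 then p1 n else p2 (n - k1))
      = walkWeight w k1 p1 + walkWeight w k2 p2 := by
  obtain ⟨h10, h1k, h1e⟩ := h1
  obtain ⟨h20, h2k, h2e⟩ := h2
  set q : ℕ → V := fun n => if n < k1 then p1 n else p2 (n - k1) with hq
  have hq1 : ∀ n, n ≤ k1 → q n = p1 n := by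
    intro n hn
    rcases eq_or_lt_of_le hn with h | h
    · simp [hq, h, h1k, ← h20]
    · simp [hq, h]
  have hq2 : ∀ n, k1 ≤ n → q n = p2 (n - k1) := by
    intro n hn
    rcases eq_or_lt_of_le hn with h | h
    · simp [hq, ← h, h1k, ← h20]
    · simp [hq, Nat.not_lt.mpr hn]
  constructor
  · refine ⟨by rw [hq1 0 (Nat.zero_le _), h10], ?_, ?_⟩
    · rw [hq2 (k1 + k2) (by omega)]
      have : k1 + k2 - k1 = k2 := by omega
      rw [this, h2k]
    · intro i hi
      rcases lt_or_ge i k1 with h | h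
      · rw [hq1 i h.le, hq1 (i+1) h]
        exact h1e i h
      · rw [hq2 i h, hq2 (i+1) (by omega)]
        have e1 : i + 1 - k1 = (i - k1) + 1 := by omega
        rw [e1]
        exact h2e (i - k1) (by omega)
  · rw [walkWeight, Finset.range_eq_Ico,
      ← Finset.sum_Ico_consecutive _ (Nat.zero_le k1) (Nat.le_add_right k1 k2)]
    have S1 : ∑ i ∈ Finset.Ico 0 k1, w (q i) (q (i+1)) = walkWeight w k1 p1 := by
      rw [walkWeight, Finset.range_eq_Ico]
      refine Finset.sum_congr rfl fun i hi => ?_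
      simp only [Finset.mem_Ico] at hi
      rw [hq1 i (by omega), hq1 (i+1) (by omega)]
    have S2 : ∑ i ∈ Finset.Ico k1 (k1 + k2), w (q i) (q (i+1)) = walkWeight w k2 p2 := by
      rw [Finset.sum_Ico_eq_sum_range, walkWeight]
      have : k1 + k2 - k1 = k2 := by omega
      rw [this]
      refine Finset.sum_congr rfl fun i hi => ?_
      rw [hq2 (k1 + i) (by omega), hq2 (k1 + i + 1) (by omega)]
      have e1 : k1 + i - k1 = i := by omega
      have e2 : k1 + i + 1 - k1 = i + 1 := by omega
      rw [e1, e2]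
    rw [S1, S2]

lemma splitWalk {k m : ℕ} {p : ℕ → V} {s t : V} (hm : m ≤ k)
    (hw : IsWalk E k p s t) :
    IsWalk E m p s (p m) ∧ IsWalk E (k - m) (fun n => p (m + n)) (p m) t ∧
    walkWeight w k p = walkWeight w m p + walkWeight w (k - m) (fun n => p (m + n)) := by
  obtain ⟨h0, hk, he⟩ := hw
  refine ⟨⟨h0, rfl, fun i hi => he i (by omega)⟩,
    ⟨by simp, ?_, fun i hi => ?_⟩, ?_⟩
  · show p (m + (k - m)) = t
    have : m + (k - m) = k := by omega
    rw [this, hk]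
  · show E (p (m + i)) (p (m + (i + 1)))
    have : m + (i + 1) = (m + i) + 1 := by omega
    rw [this]
    exact he (m + i) (by omega)
  · have T1 : ∑ i ∈ Finset.Ico 0 m, w (p i) (p (i+1)) = walkWeight w m p := by
      rw [walkWeight, Finset.range_eq_Ico]
    have T2 : ∑ i ∈ Finset.Ico m k, w (p i) (p (i+1))
        = walkWeight w (k - m) (fun n => p (m + n)) := by
      rw [Finset.sum_Ico_eq_sum_range, walkWeight]
      refine Finset.sum_congr rfl fun i hi => ?_
      rfl
    rw [walkWeight, Finset.range_eq_Ico,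
      ← Finset.sum_Ico_consecutive _ (Nat.zero_le m) hm, T1, T2]

lemma dLe_triangle [Fintype V] (hG : NoNegCycle E w) (a b : ℕ) (u x v : V) :
    dLe E w (a + b) u v ≤ dLe E w a u x + dLe E w b x v := by
  by_cases ha : dLe E w a u x = ⊤
  · rw [ha, EReal.top_add_of_ne_bot (dLe_ne_bot hG b x v)]
    exact le_top
  by_cases hb : dLe E w b x v = ⊤
  · rw [hb, EReal.add_top_of_ne_bot (dLe_ne_bot hG a u x)]
    exact le_top
  obtain ⟨k1, hk1, p1, hp1, _, hx1⟩ := dLe_attained hG a u x ha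
  obtain ⟨k2, hk2, p2, hp2, _, hx2⟩ := dLe_attained hG b x v hb
  obtain ⟨hwq, hww⟩ := concat (w := w) hp1 hp2
  calc dLe E w (a + b) u v
      ≤ ((walkWeight w (k1 + k2) (fun n => if n < k1 then p1 n else p2 (n - k1)) : ℝ) : EReal) :=
        dLe_le_walk (by omega) hwq
    _ = ((walkWeight w k1 p1 : ℝ) : EReal) + ((walkWeight w k2 p2 : ℝ) : EReal) := by
        rw [hww]; exact_mod_cast rfl
    _ = _ := by rw [hx1, hx2]

end Aux4


theorem stmt19 {V : Type*} [Fintype V] (E : V → V → Prop) (w : V → V → ℝ)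
    (hG : NoNegCycle E w) (S : Set V) (K : ℕ) (hK : 1 ≤ K)
    -- splitting hypothesis: for all `u, v` and `K < h ≤ 3K/2`, every simple
    -- path achieving `dLe h u v` with more than `K` edges contains a vertex of
    -- `S` splitting it into two parts of at most `K` edges each
    (hsplit : ∀ (u v : V) (h : ℕ), K < h → 2 * h ≤ 3 * K →
      ∀ k ≤ h, ∀ p : ℕ → V, IsWalk E k p u v →
        Function.Injective (fun i : Fin (k + 1) => p i) →
        ((walkWeight w k p : ℝ) : EReal) = dLe E w h u v →
        K < k → ∃ m ≤ k, p m ∈ S ∧ m ≤ K ∧ k - m ≤ K) :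
    ∀ (u v : V) (h : ℕ), K < h → 2 * h ≤ 3 * K →
      dLe E w h u v =
        min (dLe E w K u v)
          (⨅ (x : V) (_ : x ∈ S) (h' : ℕ) (_ : h ≤ h' + K) (_ : h' ≤ K),
            dLe E w h' u x + dLe E w (h - h') x v) := by
  intro u v h hKh h3K
  have hhK : K ≤ h := hKh.le
  have h2K : h ≤ 2 * K := by omega
  apply le_antisymm
  · apply le_min
    · exact dLe_mono hhK u v
    · refine le_iInf fun x => le_iInf fun hx => le_iInf fun h' => le_iInf fun hh1 =>
        le_iInf fun hh2 => ?_
      calc dLe E w h u v ≤ dLe E w (h' + (h - h')) u v := dLe_mono (by omega) u v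
        _ ≤ dLe E w h' u x + dLe E w (h - h') x v := dLe_triangle hG _ _ _ _ _
  · by_cases htop : dLe E w h u v = ⊤
    · rw [htop]; exact le_top
    obtain ⟨k, hk, p, hp, hpi, hx⟩ := dLe_attained hG h u v htop
    rcases le_or_gt k K with hkK | hKk
    · refine le_trans (min_le_left _ _) ?_
      rw [← hx]
      exact dLe_le_walk hkK hp
    · obtain ⟨m, hm, hmS, hmK, hkmK⟩ := hsplit u v h hKh h3K k hk p hp hpi hx hKk
      obtain ⟨hw1, hw2, hwsum⟩ := splitWalk (w := w) hm hp
      set h' := max m (h - K) with hh'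
      have hh'K : h' ≤ K := by omega
      have hhh' : h ≤ h' + K := by omega
      refine le_trans (min_le_right _ _) ?_
      refine le_trans (iInf_le _ (p m)) ?_
      refine le_trans (iInf_le _ hmS) ?_
      refine le_trans (iInf_le _ h') ?_
      refine le_trans (iInf_le _ hhh') ?_
      refine le_trans (iInf_le _ hh'K) ?_
      have t1 : dLe E w h' u (p m) ≤ ((walkWeight w m p : ℝ) : EReal) :=
        dLe_le_walk (le_max_left _ _) hw1
      have t2 : dLe E w (h - h') (p m) v
          ≤ ((walkWeight w (k - m) (fun n => p (m + n)) : ℝ) : EReal) :=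
        dLe_le_walk (by omega) hw2
      calc dLe E w h' u (p m) + dLe E w (h - h') (p m) v
          ≤ ((walkWeight w m p : ℝ) : EReal)
            + ((walkWeight w (k - m) (fun n => p (m + n)) : ℝ) : EReal) :=
            add_le_add t1 t2
        _ = ((walkWeight w k p : ℝ) : EReal) := by
            rw [hwsum]; exact_mod_cast rfl
        _ = dLe E w h u v := hx
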